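/- Let k be a positive integer, d | k, (m,k) = (f,k) = 1, and let χ⁰ be the principal character mod k. Define G(d,f,m,χ⁰) = ∑_{n=1,(n,k)=1, n≡f (mod d)}^{k} e(mn/k). If gcd(d, k/d) > 1 then G(d,f,m,χ⁰) = 0. If gcd(d, k/d) = 1 then G(d,f,m,χ⁰) = μ(k/d)·e(fmt/d), where t is the inverse of k/d modulo d. -/

import Mathlib

/-!
Expanding the condition `(n, k) = 1` by Möbius inversion writes the sum as
`∑_{e ∣ k} μ(e) S_e`, where `S_e` is the sum of `e(mn/k)` over `n ≤ k` with `e ∣ n` and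
`n ≡ f (mod d)`. Since `(f, k) = 1`, `S_e` is empty unless `(e, d) = 1`; then, with
`u e ≡ 1 (mod d)`, the two conditions merge into the single congruence `n ≡ e u f (mod e d)`.
A sum of `e(mn/k)` over a residue class modulo a proper divisor `a` of `k` vanishes, since
translating the class by `a` multiplies the sum by `e(ma/k) ≠ 1`. Hence only `e = k/d` survives,
and only when `(k/d, d) = 1`; then the class is the single residue `(k/d) t f` modulo `k`.
-/

open Complex Real ArithmeticFunction
open scoped ArithmeticFunction.Moebius

theorem Int.dvd_and_modEq_iff_modEq_mul {e d u f n : ℤ} (hu : u * e ≡ 1 [ZMOD d]) :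
    e ∣ n ∧ n ≡ f [ZMOD d] ↔ n ≡ e * (u * f) [ZMOD e * d] := by
  have hf : e * (u * f) ≡ f [ZMOD d] := by
    simpa [← mul_assoc, mul_comm e u] using hu.mul_right f
  constructor
  · rintro ⟨⟨j, rfl⟩, hj⟩
    refine Int.ModEq.mul_left' ?_
    calc j = 1 * j := (one_mul j).symm
      _ ≡ u * e * j [ZMOD d] := (hu.mul_right j).symm
      _ = u * (e * j) := mul_assoc u e j
      _ ≡ u * f [ZMOD d] := hj.mul_left u
  · intro h
    exact ⟨(h.of_mul_right d).dvd_iff.2 (dvd_mul_right e _), (h.of_mul_left e).trans hf⟩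

theorem Int.not_dvd_and_modEq_of_not_coprime {k d e : ℕ} {f : ℤ} (hf : IsCoprime f k)
    (hek : e ∣ k) (hed : ¬ e.Coprime d) (n : ℤ) : ¬ ((e : ℤ) ∣ n ∧ n ≡ f [ZMOD d]) := by
  rintro ⟨hen, hnf⟩
  have hgf : ((e.gcd d : ℕ) : ℤ) ∣ f := by
    have hgn : ((e.gcd d : ℕ) : ℤ) ∣ n :=
      (Int.natCast_dvd_natCast.2 (e.gcd_dvd_left d)).trans hen
    have hgd : ((e.gcd d : ℕ) : ℤ) ∣ f - n :=
      (Int.natCast_dvd_natCast.2 (e.gcd_dvd_right d)).trans hnf.dvd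
    simpa using dvd_add hgd hgn
  have hgk : ((e.gcd d : ℕ) : ℤ) ∣ k := Int.natCast_dvd_natCast.2 ((e.gcd_dvd_left d).trans hek)
  exact hed (Nat.isUnit_iff.1 (Int.ofNat_isUnit.1 (hf.isUnit_of_dvd' hgf hgk)))

theorem Int.exists_mul_modEq_one {e d : ℕ} (h : e.Coprime d) : ∃ u : ℤ, u * e ≡ 1 [ZMOD d] := by
  obtain ⟨u, v, huv⟩ := Nat.isCoprime_iff_coprime.2 h
  exact ⟨u, Int.modEq_iff_dvd.2 ⟨v, by rw [← huv]; ring⟩⟩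

theorem sum_divisors_filter_dvd_moebius {R : Type*} [Ring R] {k : ℕ} (hk : k ≠ 0) (n : ℕ) :
    ∑ e ∈ k.divisors with e ∣ n, (μ e : R) = if n.gcd k = 1 then 1 else 0 := by
  have hfilter : {e ∈ k.divisors | e ∣ n} = (n.gcd k).divisors := by
    rw [← Nat.divisors_filter_dvd_of_dvd hk (Nat.gcd_dvd_right n k)]
    exact Finset.filter_congr fun e he => by simp [Nat.dvd_gcd_iff, Nat.dvd_of_mem_divisors he]
  rw [hfilter, ← one_apply (R := R), ← coe_moebius_mul_coe_zeta, coe_mul_zeta_apply]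
  rfl

theorem sum_ite_gcd_eq_one_eq_sum_moebius {R : Type*} [CommRing R] {k : ℕ} (hk : k ≠ 0)
    (s : Finset ℕ) (P : ℕ → Prop) [DecidablePred P] (F : ℕ → R) :
    ∑ n ∈ s, (if n.gcd k = 1 ∧ P n then F n else 0)
      = ∑ e ∈ k.divisors, (μ e : R) * ∑ n ∈ s, (if e ∣ n ∧ P n then F n else 0) := by
  simp only [Finset.mul_sum]
  rw [Finset.sum_comm]
  refine Finset.sum_congr rfl fun n _ => ?_
  by_cases hP : P n
  · simp only [hP, and_true, mul_ite, mul_zero, ← Finset.sum_filter, ← Finset.sum_mul,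
      sum_divisors_filter_dvd_moebius hk, ite_mul, one_mul, zero_mul]
  · simp [hP]

theorem ZMod.sum_Icc_natCast {M : Type*} [AddCommMonoid M] (k : ℕ) [NeZero k]
    (g : ZMod k → M) : ∑ n ∈ Finset.Icc 1 k, g n = ∑ x, g x := by
  refine Finset.sum_nbij' (fun n => (n : ZMod k)) (fun x => if x = 0 then k else x.val)
    (by simp) ?_ ?_ ?_ (by simp)
  · intro x _
    split_ifs with hx
    · simp [Nat.one_le_iff_ne_zero, NeZero.ne k]
    · simp [Nat.one_le_iff_ne_zero, (ZMod.val_ne_zero x).2 hx, x.val_lt.le]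
  · intro n hn
    obtain ⟨hn1, hnk⟩ := Finset.mem_Icc.1 hn
    rcases hnk.lt_or_eq with hlt | rfl
    · have hn0 : (n : ZMod k) ≠ 0 := by
        rw [Ne, ZMod.natCast_eq_zero_iff]
        exact fun h => absurd (Nat.le_of_dvd hn1 h) (by omega)
      simp [hn0, ZMod.val_natCast, Nat.mod_eq_of_lt hlt]
    · simp
  · intro x _
    split_ifs with hx <;> simp [hx]

theorem AddChar.sum_ite_eq_zero_of_add_invariant {G R : Type*} [AddGroup G] [Fintype G]
    [CommRing R] [NoZeroDivisors R] (ψ : AddChar G R) (P : G → Prop) [DecidablePred P] {y : G}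
    (hP : ∀ x, P (x + y) ↔ P x) (hy : ψ y ≠ 1) :
    ∑ x, (if P x then ψ x else 0) = 0 := by
  set S := ∑ x, (if P x then ψ x else 0)
  have hshift : S = ψ y * S :=
    calc S = ∑ x, (if P (x + y) then ψ (x + y) else 0) :=
          (Equiv.sum_comp (Equiv.addRight y) _).symm
      _ = ψ y * S := by
          rw [Finset.mul_sum]
          refine Finset.sum_congr rfl fun x _ => ?_
          simp only [hP, AddChar.map_add_eq_mul, mul_ite, mul_zero, mul_comm (ψ x)]
  have hS : (ψ y - 1) * S = 0 := by rw [sub_mul, ← hshift]; ring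
  exact (mul_eq_zero.1 hS).resolve_left (sub_ne_zero.2 hy)

theorem ZMod.sum_ite_castHom_eq_stdAddChar_mul_eq_zero {k a : ℕ} [NeZero k] (hak : a ∣ k)
    (ha : a ≠ k) {m : ZMod k} (hm : IsUnit m) (c : ZMod a) :
    ∑ x : ZMod k, (if castHom hak (ZMod a) x = c then stdAddChar (m * x) else 0) = 0 := by
  refine ((stdAddChar (N := k)).mulShift m).sum_ite_eq_zero_of_add_invariant _
    (y := (a : ZMod k)) (fun x => ?_) ?_
  · rw [map_add, map_natCast, ZMod.natCast_self, add_zero]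
  · rw [AddChar.mulShift_apply, Ne, ← AddChar.map_zero_eq_one (stdAddChar (N := k)),
      ZMod.injective_stdAddChar.eq_iff, hm.mul_right_eq_zero, ZMod.natCast_eq_zero_iff]
    exact fun hka => ha (Nat.dvd_antisymm hak hka)

theorem sum_Icc_modEq_exp {k a : ℕ} (hk : 0 < k) (hak : a ∣ k) {m : ℤ} (hm : IsCoprime m k)
    (c : ℤ) :
    ∑ n ∈ Finset.Icc 1 k, (if (n : ℤ) ≡ c [ZMOD a] then exp (2 * π * I * (m * n / k)) else 0)
      = if a = k then exp (2 * π * I * (m * c / k)) else 0 := by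
  have : NeZero k := ⟨hk.ne'⟩
  have hexp (x : ℤ) :
      exp (2 * π * I * (m * x / k)) = ZMod.stdAddChar ((m * x : ℤ) : ZMod k) := by
    rw [ZMod.stdAddChar_coe]; push_cast; ring_nf
  have hsummand (n : ℕ) : (if (n : ℤ) ≡ c [ZMOD a] then exp (2 * π * I * (m * n / k)) else 0)
      = if ZMod.castHom hak (ZMod a) (n : ZMod k) = c then
          ZMod.stdAddChar ((m : ZMod k) * (n : ZMod k)) else 0 := by
    refine if_congr ?_ ?_ rfl
    · rw [map_natCast, ← ZMod.intCast_eq_intCast_iff, Int.cast_natCast]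
    · exact_mod_cast hexp n
  rw [Finset.sum_congr rfl fun n _ => hsummand n, ZMod.sum_Icc_natCast k
    (fun x => if ZMod.castHom hak (ZMod a) x = c then ZMod.stdAddChar ((m : ZMod k) * x) else 0)]
  split_ifs with h
  · subst h
    rw [ZMod.castHom_self, hexp]
    simp
  · have hmu : IsUnit (m : ZMod k) :=
      isCoprime_zero_right.1 (by simpa using hm.map (Int.castRingHom (ZMod k)))
    exact ZMod.sum_ite_castHom_eq_stdAddChar_mul_eq_zero hak h hmu c

theorem sum_Icc_dvd_modEq_exp {k d e : ℕ} (hk : 0 < k) (hedk : e * d ∣ k) {u : ℤ}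
    (hu : u * e ≡ 1 [ZMOD d]) {m : ℤ} (hm : IsCoprime m k) (f : ℤ) :
    ∑ n ∈ Finset.Icc 1 k,
        (if e ∣ n ∧ (n : ℤ) ≡ f [ZMOD d] then exp (2 * π * I * (m * n / k)) else 0)
      = if e * d = k then exp (2 * π * I * (m * (e * (u * f)) / k)) else 0 := by
  have hcond (n : ℕ) :
      e ∣ n ∧ (n : ℤ) ≡ f [ZMOD d] ↔ (n : ℤ) ≡ e * (u * f) [ZMOD (e * d : ℕ)] := by
    rw [← Int.natCast_dvd_natCast, Nat.cast_mul, Int.dvd_and_modEq_iff_modEq_mul hu]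
  simp only [hcond]
  rw [sum_Icc_modEq_exp hk hedk hm]
  push_cast
  rfl

theorem sum_Icc_dvd_modEq_eq_zero_of_not_coprime {k d e : ℕ} {f : ℤ} (hf : IsCoprime f k)
    (hek : e ∣ k) (hed : ¬ e.Coprime d) (F : ℕ → ℂ) :
    ∑ n ∈ Finset.Icc 1 k, (if e ∣ n ∧ (n : ℤ) ≡ f [ZMOD d] then F n else 0) = 0 :=
  Finset.sum_eq_zero fun n _ => if_neg fun ⟨hen, hnf⟩ =>
    Int.not_dvd_and_modEq_of_not_coprime hf hek hed n ⟨Int.natCast_dvd_natCast.2 hen, hnf⟩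

open scoped Classical in
theorem stmt_7_general (k : ℕ) (hk : 0 < k) (d : ℕ) (hd : d ∣ k)
    (m f : ℤ) (hm : IsCoprime m (k : ℤ)) (hf : IsCoprime f (k : ℤ)) :
    ((1 < Nat.gcd d (k / d) →
        (∑ n ∈ Finset.Icc 1 k,
          if Nat.gcd n k = 1 ∧ (n : ℤ) ≡ f [ZMOD (d : ℤ)] then
            Complex.exp (2 * Real.pi * Complex.I * (m * n / k)) else 0) = 0)
      ∧ (Nat.gcd d (k / d) = 1 → ∀ t : ℤ, t * (k / d : ℕ) ≡ 1 [ZMOD (d : ℤ)] →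
        (∑ n ∈ Finset.Icc 1 k,
          if Nat.gcd n k = 1 ∧ (n : ℤ) ≡ f [ZMOD (d : ℤ)] then
            Complex.exp (2 * Real.pi * Complex.I * (m * n / k)) else 0)
          = ((ArithmeticFunction.moebius (k / d) : ℤ) : ℂ) *
              Complex.exp (2 * Real.pi * Complex.I * (f * m * t / d)))) := by
  have hd0 : 0 < d := Nat.pos_of_dvd_of_pos hd hk
  set q := k / d
  have hqd : q * d = k := Nat.div_mul_cancel hd
  have hq : q ∈ k.divisors := Nat.mem_divisors.2 ⟨Nat.div_dvd_of_dvd hd, hk.ne'⟩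
  rw [sum_ite_gcd_eq_one_eq_sum_moebius hk.ne', Finset.sum_eq_single_of_mem q hq ?other]
  case other =>
    intro e he hne
    have hek := Nat.dvd_of_mem_divisors he
    by_cases hed : e.Coprime d
    · obtain ⟨u, hu⟩ := Int.exists_mul_modEq_one hed
      rw [sum_Icc_dvd_modEq_exp hk (hed.mul_dvd_of_dvd_of_dvd hek hd) hu hm,
        if_neg fun h => hne (Nat.div_eq_of_eq_mul_left hd0 h.symm).symm, mul_zero]
    · rw [sum_Icc_dvd_modEq_eq_zero_of_not_coprime hf hek hed, mul_zero]
  refine ⟨fun hgcd => ?_, fun _ t ht => ?_⟩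
  · have hnq : ¬ q.Coprime d := by
      rw [Nat.coprime_comm, Nat.Coprime]; omega
    rw [sum_Icc_dvd_modEq_eq_zero_of_not_coprime hf (Nat.div_dvd_of_dvd hd) hnq, mul_zero]
  · rw [sum_Icc_dvd_modEq_exp hk hqd.dvd ht hm, if_pos hqd]
    have hqC : (q : ℂ) ≠ 0 := by exact_mod_cast (Nat.div_pos (Nat.le_of_dvd hk hd) hd0).ne'
    have hdC : (d : ℂ) ≠ 0 := by exact_mod_cast hd0.ne'
    congr 2
    rw [← hqd]
    push_cast
    field_simp

open scoped Classical in
/-- Lemma 3.3: evaluation of `G(d,f,m,χ⁰) = ∑_{n≤k,(n,k)=1,n≡f (d)} e(mn/k)`.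
If `gcd(d, k/d) > 1` the sum vanishes; if `gcd(d, k/d) = 1` it equals
`μ(k/d)·e(fmt/d)` where `t·(k/d) ≡ 1 (mod d)`. -/
theorem stmt_7 (k : ℕ) (hk : 0 < k) (d : ℕ) (hd : d ∣ k) (hd0 : 0 < d)
    (m f : ℤ) (hm : IsCoprime m (k : ℤ)) (hf : IsCoprime f (k : ℤ)) :
    ((1 < Nat.gcd d (k / d) →
        (∑ n ∈ Finset.Icc 1 k,
          if Nat.gcd n k = 1 ∧ (n : ℤ) ≡ f [ZMOD (d : ℤ)] then
            Complex.exp (2 * Real.pi * Complex.I * (m * n / k)) else 0) = 0)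
      ∧ (Nat.gcd d (k / d) = 1 → ∀ t : ℤ, t * (k / d : ℕ) ≡ 1 [ZMOD (d : ℤ)] →
        (∑ n ∈ Finset.Icc 1 k,
          if Nat.gcd n k = 1 ∧ (n : ℤ) ≡ f [ZMOD (d : ℤ)] then
            Complex.exp (2 * Real.pi * Complex.I * (m * n / k)) else 0)
          = ((ArithmeticFunction.moebius (k / d) : ℤ) : ℂ) *
              Complex.exp (2 * Real.pi * Complex.I * (f * m * t / d)))) :=
  stmt_7_general k hk d hd m f hm hf
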